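/- arXiv:2512.19160 — 2 statements merged into one kernel-verified Lean document; each statement's English description precedes it below -/
import Mathlib

section
/- Let A be a self-adjoint operator on a Hilbert space H with orthonormal eigenbasis {e_i} and eigenvalues τ_i ≥ τ₁ > 0, and let λ, C, γ, μ be positive reals with γ = λ/C, μ = 1/C². Suppose the spectral inequality ‖P_N y‖²_{L²(ω)} ≥ C ‖P_N y‖² holds, where P_N projects onto modes with τ_i ≤ λ. Then for all y in the domain, μ⟨A P_N y, P_N y⟩ + ⟨A(I−P_N)y, (I−P_N)y⟩ + μγ‖P_N y‖²_{L²(ω)} + γ⟨χ_ω P_N y, (I−P_N)y⟩ ≥ c‖y‖² for some constant c > 0, where c = min{ (λ/C²)(1−√2/2), (λ/2)(1−√2/2) }. -/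
set_option maxHeartbeats 1000000 in
/-- Coercivity of the linear part in the μ-inner ℝ product. `A` stands for the (positive
self-adjoint) operator `−Δ`, `P` for the spectral projection onto modes with `τ_i ≤ λ`
(so that `⟪Az,z⟫ ≥ λ‖z‖²` on the range of `I−P`), and `χ` for multiplication by the
indicator of `ω` (an orthogonal projection); `‖·‖_{L²(ω)} = ‖χ·‖`. Under the spectral
inequality `‖χPy‖² ≥ C‖Py‖²` and with `γ = λ/C`, `μ = 1/C²`, one has
`μ⟪APy,Py⟫ + ⟪A(I−P)y,(I−P)y⟫ + μγ‖χPy‖² + γ⟪χPy,(I−P)y⟫ ≥ c‖y‖²` with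
`c = min{(λ/C²)(1−√2/2), (λ/2)(1−√2/2)} > 0`. -/
theorem stmt_13 {H : Type*} [NormedAddCommGroup H] [InnerProductSpace ℝ H]
    (A P χ : H →L[ℝ] H)
    (hPsa : ∀ u v : H, (inner ℝ (P u) v : ℝ) = inner ℝ u (P v))
    (hPidem : ∀ u : H, P (P u) = P u)
    (hχsa : ∀ u v : H, (inner ℝ (χ u) v : ℝ) = inner ℝ u (χ v))
    (hχidem : ∀ u : H, χ (χ u) = χ u)
    (hApos : ∀ z : H, (0 : ℝ) ≤ inner ℝ (A z) z)
    (lam C γ μ : ℝ) (hlam : 0 < lam) (hC : 0 < C)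
    (hγ : γ = lam / C) (hμ : μ = 1 / C ^ 2)
    (hHigh : ∀ z : H, P z = 0 → lam * ‖z‖ ^ 2 ≤ inner ℝ (A z) z)
    (hspec : ∀ y : H, C * ‖P y‖ ^ 2 ≤ ‖χ (P y)‖ ^ 2) :
    ∃ c > 0, c = min ((lam / C ^ 2) * (1 - Real.sqrt 2 / 2))
        ((lam / 2) * (1 - Real.sqrt 2 / 2)) ∧
      ∀ y : H,
        μ * inner ℝ (A (P y)) (P y) + inner ℝ (A (y - P y)) (y - P y)
          + μ * γ * ‖χ (P y)‖ ^ 2 + γ * inner ℝ (χ (P y)) (y - P y)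
        ≥ c * ‖y‖ ^ 2 := by
  have hs2 : Real.sqrt 2 ^ 2 = 2 := Real.sq_sqrt (by norm_num)
  have hs0 : 0 ≤ Real.sqrt 2 := Real.sqrt_nonneg 2
  have hs1 : 1 < Real.sqrt 2 := by nlinarith
  have hslt : Real.sqrt 2 < 2 := by nlinarith
  have hfac : 0 < 1 - Real.sqrt 2 / 2 := by linarith
  set a := (lam / C ^ 2) * (1 - Real.sqrt 2 / 2) with ha
  set b := (lam / 2) * (1 - Real.sqrt 2 / 2) with hb
  have hapos : 0 < a := mul_pos (div_pos hlam (pow_pos hC 2)) hfac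
  have hbpos : 0 < b := mul_pos (by positivity) hfac
  refine ⟨min a b, lt_min hapos hbpos, rfl, ?_⟩
  intro y
  set p := P y with hp
  set q := y - P y with hqdef
  have hPq : P q = 0 := by rw [hqdef, map_sub, hPidem, sub_self]
  have hortho : (inner ℝ p q : ℝ) = 0 := by
    rw [hp, hPsa, hPq, inner_zero_right]
  have hy : ‖y‖ ^ 2 = ‖p‖ ^ 2 + ‖q‖ ^ 2 := by
    have hsum : y = p + q := by rw [hp, hqdef]; abel
    rw [hsum, @norm_add_sq_real, hortho]; ring
  have hχnorm : ‖χ p‖ ≤ ‖p‖ := by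
    have h1 : ‖χ p‖ ^ 2 = inner ℝ (χ p) p := by
      calc ‖χ p‖ ^ 2 = inner ℝ (χ p) (χ p) := (real_inner_self_eq_norm_sq _).symm
        _ = inner ℝ p (χ (χ p)) := hχsa p (χ p)
        _ = inner ℝ p (χ p) := by rw [hχidem]
        _ = inner ℝ (χ p) p := (hχsa p p).symm
    have h2 : (inner ℝ (χ p) p : ℝ) ≤ ‖χ p‖ * ‖p‖ := real_inner_le_norm _ _
    nlinarith [norm_nonneg (χ p), norm_nonneg p]
  have hcross : -(‖p‖ * ‖q‖) ≤ (inner ℝ (χ p) q : ℝ) := by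
    have h1 : |(inner ℝ (χ p) q : ℝ)| ≤ ‖χ p‖ * ‖q‖ := abs_real_inner_le_norm _ _
    have h2 : ‖χ p‖ * ‖q‖ ≤ ‖p‖ * ‖q‖ :=
      mul_le_mul_of_nonneg_right hχnorm (norm_nonneg q)
    have := neg_abs_le (inner ℝ (χ p) q : ℝ)
    linarith
  have hq := hHigh q hPq
  have hppos := hApos p
  have hsp : C * ‖p‖ ^ 2 ≤ ‖χ p‖ ^ 2 := hspec y
  have hμpos : 0 < μ := by rw [hμ]; positivity
  have hγpos : 0 < γ := by rw [hγ]; positivity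
  have hmin1 : min a b ≤ a := min_le_left _ _
  have hmin2 : min a b ≤ b := min_le_right _ _
  -- key algebraic inequality
  have hC2 : (0:ℝ) < C ^ 2 := pow_pos hC 2
  have key : a * ‖p‖ ^ 2 + b * ‖q‖ ^ 2
      ≤ lam * ‖q‖ ^ 2 + (lam / C ^ 2) * ‖p‖ ^ 2 - (lam / C) * (‖p‖ * ‖q‖) := by
    have key' : (a * ‖p‖ ^ 2 + b * ‖q‖ ^ 2) * C ^ 2
        ≤ (lam * ‖q‖ ^ 2 + (lam / C ^ 2) * ‖p‖ ^ 2 - (lam / C) * (‖p‖ * ‖q‖)) * C ^ 2 := by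
      have eR : (lam * ‖q‖ ^ 2 + (lam / C ^ 2) * ‖p‖ ^ 2 - (lam / C) * (‖p‖ * ‖q‖)) * C ^ 2
          = lam * ‖q‖ ^ 2 * C ^ 2 + lam * ‖p‖ ^ 2 - lam * C * (‖p‖ * ‖q‖) := by
        field_simp
      have eL : (a * ‖p‖ ^ 2 + b * ‖q‖ ^ 2) * C ^ 2
          = lam * (1 - Real.sqrt 2 / 2) * ‖p‖ ^ 2
            + lam / 2 * (1 - Real.sqrt 2 / 2) * ‖q‖ ^ 2 * C ^ 2 := by
        rw [ha, hb]; field_simp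
      rw [eR, eL]
      have hspos : (0:ℝ) < Real.sqrt 2 := by linarith
      have hX : 0 ≤ lam * (Real.sqrt 2 / 2) * ‖p‖ ^ 2
          + lam * C ^ 2 * (1 / 2 + Real.sqrt 2 / 4) * ‖q‖ ^ 2 - lam * C * (‖p‖ * ‖q‖) := by
        have hidentity : Real.sqrt 2 * (lam * (Real.sqrt 2 / 2) * ‖p‖ ^ 2
            + lam * C ^ 2 * (1 / 2 + Real.sqrt 2 / 4) * ‖q‖ ^ 2 - lam * C * (‖p‖ * ‖q‖))
            = (1 / 2) * lam * (Real.sqrt 2 * ‖p‖ - C * ‖q‖) ^ 2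
              + lam * Real.sqrt 2 / 2 * (C * ‖q‖) ^ 2 := by
          linear_combination (lam * C ^ 2 * ‖q‖ ^ 2 / 4) * hs2
        have h0 : 0 ≤ Real.sqrt 2 * (lam * (Real.sqrt 2 / 2) * ‖p‖ ^ 2
            + lam * C ^ 2 * (1 / 2 + Real.sqrt 2 / 4) * ‖q‖ ^ 2 - lam * C * (‖p‖ * ‖q‖)) := by
          rw [hidentity]; positivity
        exact nonneg_of_mul_nonneg_right h0 hspos
      linarith [hX]
    exact le_of_mul_le_mul_right key' hC2
  have habove : a * ‖p‖ ^ 2 + b * ‖q‖ ^ 2 ≥ min a b * ‖y‖ ^ 2 := by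
    rw [hy]
    nlinarith [sq_nonneg ‖p‖, sq_nonneg ‖q‖]
  have h3 : μ * γ * ‖χ p‖ ^ 2 ≥ (lam / C ^ 2) * ‖p‖ ^ 2 := by
    rw [hμ, hγ]
    have h4 : 0 < 1 / C ^ 2 * (lam / C) := by positivity
    have := mul_le_mul_of_nonneg_left hsp h4.le
    calc lam / C ^ 2 * ‖p‖ ^ 2 = 1 / C ^ 2 * (lam / C) * (C * ‖p‖ ^ 2) := by
          field_simp
      _ ≤ 1 / C ^ 2 * (lam / C) * ‖χ p‖ ^ 2 := this
  have h5 : γ * (inner ℝ (χ p) q : ℝ) ≥ -((lam / C) * (‖p‖ * ‖q‖)) := by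
    rw [hγ]
    have := mul_le_mul_of_nonneg_left hcross (by positivity : (0:ℝ) ≤ lam / C)
    linarith [this]
  have h6 : μ * (inner ℝ (A p) p : ℝ) ≥ 0 := by positivity
  linarith
end

section
/- Let A : D(A) ⊆ H → 2^H be a monotone operator on a real Hilbert space such that I + A is surjective. If y, ŷ are absolutely continuous functions with y' + Ay ∋ f, ŷ' + Aŷ ∋ g almost everywhere, then for all t ≥ 0, ‖y(t) − ŷ(t)‖ ≤ ‖y(0) − ŷ(0)‖ + ∫₀ᵗ ‖f(s) − g(s)‖ ds. -/
open MeasureTheory Set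

/-- Contraction estimate for strong solutions of a maximal monotone differential
inclusion: if `A` is monotone with `I + A` surjective, and `y, ŷ` are (absolutely
continuous, here differentiable) solutions of `y' + Ay ∋ f`, `ŷ' + Aŷ ∋ g`, then
`‖y(t) − ŷ(t)‖ ≤ ‖y(0) − ŷ(0)‖ + ∫₀ᵗ ‖f(s) − g(s)‖ ds` for all `t ≥ 0`. -/
theorem stmt_17 {H : Type*} [NormedAddCommGroup H] [InnerProductSpace ℝ H]
    [CompleteSpace H]
    (A : H → Set H)
    (hmono : ∀ x y u v : H, u ∈ A x → v ∈ A y → (0 : ℝ) ≤ inner ℝ (u - v) (x - y))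
    (hsurj : ∀ h : H, ∃ x u, u ∈ A x ∧ x + u = h)
    (y yh y' yh' f g : ℝ → H)
    (hyd : ∀ t, 0 ≤ t → HasDerivAt y (y' t) t)
    (hyhd : ∀ t, 0 ≤ t → HasDerivAt yh (yh' t) t)
    (hy : ∀ t, 0 ≤ t → f t - y' t ∈ A (y t))
    (hyh : ∀ t, 0 ≤ t → g t - yh' t ∈ A (yh t))
    (hint : ∀ t, 0 ≤ t → IntervalIntegrable (fun s => ‖f s - g s‖)
        MeasureTheory.volume 0 t) :
    ∀ t, 0 ≤ t → ‖y t - yh t‖ ≤ ‖y 0 - yh 0‖ + ∫ s in (0:ℝ)..t, ‖f s - g s‖ := by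
  intro t ht
  set w : ℝ → H := fun s => y s - yh s with hw
  set w' : ℝ → H := fun s => y' s - yh' s with hw'
  have hwd : ∀ s, 0 ≤ s → HasDerivAt w (w' s) s := fun s hs =>
    (hyd s hs).sub (hyhd s hs)
  -- key monotonicity estimate
  have hkey : ∀ s, 0 ≤ s → (inner ℝ (w' s) (w s) : ℝ) ≤ ‖f s - g s‖ * ‖w s‖ := by
    intro s hs
    have h0 := hmono (y s) (yh s) (f s - y' s) (g s - yh' s) (hy s hs) (hyh s hs)
    have h1 : (inner ℝ (w' s) (w s) : ℝ) ≤ inner ℝ (f s - g s) (w s) := by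
      have : (inner ℝ (f s - g s) (w s) : ℝ) - inner ℝ (w' s) (w s) =
          inner ℝ ((f s - y' s) - (g s - yh' s)) (y s - yh s) := by
        rw [← inner_sub_left]; congr 1; simp only [hw', hw]; abel
      linarith [h0, this]
    exact h1.trans (real_inner_le_norm _ _)
  apply le_of_forall_pos_le_add
  intro ε hε
  -- the regularized norm φ s = sqrt(⟪w s, w s⟫ + ε²)
  set q : ℝ → ℝ := fun s => (inner ℝ (w s) (w s) : ℝ) + ε ^ 2 with hq
  have hqpos : ∀ s, 0 < q s := fun s => by
    have := real_inner_self_nonneg (x := w s); positivity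
  set φ : ℝ → ℝ := fun s => Real.sqrt (q s) with hφ
  have hnorm_le : ∀ s, ‖w s‖ ≤ φ s := by
    intro s
    rw [hφ]
    have : ‖w s‖ = Real.sqrt ((inner ℝ (w s) (w s) : ℝ)) := by
      rw [real_inner_self_eq_norm_sq, Real.sqrt_sq (norm_nonneg _)]
    rw [this]
    exact Real.sqrt_le_sqrt (by simp [hq, sq_nonneg ε])
  have hφd : ∀ s, 0 ≤ s →
      HasDerivAt φ ((inner ℝ (w' s) (w s) : ℝ) / φ s) s := by
    intro s hs
    have hqd : HasDerivAt q ((inner ℝ (w s) (w' s) : ℝ) +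
        (inner ℝ (w' s) (w s) : ℝ)) s := by
      exact (((hwd s hs).inner ℝ (hwd s hs)).add_const (ε ^ 2))
    have := (Real.hasDerivAt_sqrt (hqpos s).ne').comp s hqd
    refine this.congr_deriv ?_
    rw [real_inner_comm (w s) (w' s)]
    field_simp [hφ]
    ring
  have hφcont : ContinuousOn φ (Icc 0 t) := fun s hs =>
    ((hφd s hs.1).continuousAt).continuousWithinAt
  have hφbound : ∀ s ∈ Ioo (0:ℝ) t,
      (inner ℝ (w' s) (w s) : ℝ) / φ s ≤ ‖f s - g s‖ := by
    intro s hs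
    have hφpos : 0 < φ s := Real.sqrt_pos.2 (hqpos s)
    rw [div_le_iff₀ hφpos]
    calc (inner ℝ (w' s) (w s) : ℝ) ≤ ‖f s - g s‖ * ‖w s‖ := hkey s hs.1.le
      _ ≤ ‖f s - g s‖ * φ s :=
        mul_le_mul_of_nonneg_left (hnorm_le s) (norm_nonneg _)
  have hφint : IntegrableOn (fun s => ‖f s - g s‖) (Icc 0 t) volume := by
    have := (hint t ht).1
    exact this.congr_set_ae Ioc_ae_eq_Icc.symm |>.congr_set_ae (by rfl)
  have hmain : φ t - φ 0 ≤ ∫ s in (0:ℝ)..t, ‖f s - g s‖ := by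
    apply intervalIntegral.sub_le_integral_of_hasDeriv_right_of_le ht hφcont
      (fun s hs => ((hφd s hs.1.le).hasDerivWithinAt)) hφint hφbound
  have hφ0 : φ 0 ≤ ‖w 0‖ + ε := by
    rw [hφ]
    have h2 : q 0 = ‖w 0‖ ^ 2 + ε ^ 2 := by
      simp only [hq, real_inner_self_eq_norm_sq]
    have h1 : q 0 ≤ (‖w 0‖ + ε) ^ 2 := by
      rw [h2]; nlinarith [norm_nonneg (w 0), hε.le]
    calc Real.sqrt (q 0) ≤ Real.sqrt ((‖w 0‖ + ε) ^ 2) := Real.sqrt_le_sqrt h1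
      _ = ‖w 0‖ + ε := Real.sqrt_sq (by positivity)
  calc ‖w t‖ ≤ φ t := hnorm_le t
    _ ≤ φ 0 + ∫ s in (0:ℝ)..t, ‖f s - g s‖ := by linarith [hmain]
    _ ≤ ‖w 0‖ + ε + ∫ s in (0:ℝ)..t, ‖f s - g s‖ := by linarith [hφ0]
    _ = ‖y 0 - yh 0‖ + (∫ s in (0:ℝ)..t, ‖f s - g s‖) + ε := by rw [hw]; ring
end
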